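/- arXiv:2501.15217 — 4 statements merged into one kernel-verified Lean document; each statement's English description precedes it below -/
import Mathlib

section
/- Let f, g : ℝⁿ → ℝ be twice continuously differentiable and strongly convex, and let θ(λ) be the unique minimizer of L(θ,λ) = f(θ) + λ·g(θ). If λ ↦ θ(λ) is differentiable and ∇g(θ(λ)) ≠ 0, then the composite function λ ↦ g(θ(λ)) has strictly negative derivative: d/dλ [g(θ(λ))] = -∇g(θ(λ))ᵀ [∇²_θ L(θ(λ),λ)]⁻¹ ∇g(θ(λ)) < 0. -/
/-!
Each `θ l`, `l ≥ 0`, minimizes `f + l g`, so `∇f(θ l) + l ∇g(θ l) = 0` on `[0, ∞)`.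
Differentiating this identity at `λ` (from the right, as `λ` may be `0`) gives
`H(λ) θ'(λ) = -∇g(θ λ)`, hence `(g ∘ θ)'(λ) = ⟪∇g, θ'(λ)⟫ = -⟪∇g, H(λ)⁻¹ ∇g⟫`.
As `f + λ g` is `m`-strongly convex, `⟪H u, u⟫ ≥ m ‖u‖²`, which is positive at
`u = H(λ)⁻¹ ∇g ≠ 0`.
-/

open RealInnerProductSpace Set

section InnerProductSpace

variable {E : Type*} [NormedAddCommGroup E] [InnerProductSpace ℝ E]

lemma StrongConvexOn.add_const_mul {s : Set E} {m c : ℝ} {f g : E → ℝ}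
    (hf : StrongConvexOn s m f) (hg : ConvexOn ℝ s g) (hc : 0 ≤ c) :
    StrongConvexOn s m fun z => f z + c * g z := by
  have h := hf.add (uniformConvexOn_zero.mpr (hg.smul hc))
  rw [add_zero] at h
  exact h

lemma HasDerivAt.eq_zero_of_eqOn_Ici {F : ℝ → E} {F' : E} {a : ℝ} (hF : HasDerivAt F F' a)
    (hzero : EqOn F 0 (Ici a)) : F' = 0 := by
  have hu := uniqueDiffOn_Ici a a self_mem_Ici
  rw [← hF.hasDerivWithinAt.derivWithin hu,
    ((hasDerivWithinAt_const a _ 0).congr hzero (hzero self_mem_Ici)).derivWithin hu]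

lemma ContinuousLinearEquiv.inner_symm_apply_self_pos {A : E ≃L[ℝ] E} {m : ℝ} (hm : 0 < m)
    (hA : ∀ u, m * ‖u‖ ^ 2 ≤ ⟪A u, u⟫) {v : E} (hv : v ≠ 0) : 0 < ⟪v, A.symm v⟫ := by
  have hu : A.symm v ≠ 0 := by simpa using hv
  calc 0 < m * ‖A.symm v‖ ^ 2 := by positivity
    _ ≤ ⟪A (A.symm v), A.symm v⟫ := hA _
    _ = ⟪v, A.symm v⟫ := by rw [A.apply_symm_apply]

lemma apply_deriv_eq_neg_of_stationary {F G : E → E} {θ : ℝ → E} {θ' : E} {lam : ℝ}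
    {H : E →L[ℝ] E} (hstat : ∀ l ≥ lam, F (θ l) + l • G (θ l) = 0)
    (hθ : HasDerivAt θ θ' lam) (hH : HasFDerivAt (fun z => F z + lam • G z) H (θ lam))
    (hG : DifferentiableAt ℝ G (θ lam)) : H θ' = -G (θ lam) := by
  have hsplit : (fun l => F (θ l) + l • G (θ l)) =
      fun l => (F (θ l) + lam • G (θ l)) + (l - lam) • G (θ l) := by
    funext l; rw [sub_smul]; abel
  have hderiv : HasDerivAt (fun l => F (θ l) + l • G (θ l)) (H θ' + G (θ lam)) lam := by
    rw [hsplit]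
    exact ((hH.comp_hasDerivAt lam hθ).add (((hasDerivAt_id lam).sub_const lam).smul
      (hG.hasFDerivAt.comp_hasDerivAt lam hθ))).congr_deriv (by simp)
  exact eq_neg_of_add_eq_zero_left (hderiv.eq_zero_of_eqOn_Ici hstat)

end InnerProductSpace

section Gradient

variable {E : Type*} [NormedAddCommGroup E] [InnerProductSpace ℝ E] [CompleteSpace E]

lemma HasGradientAt.comp_hasDerivAt {h : E → ℝ} {γ : ℝ → E} {v γ' : E} {t : ℝ}
    (hh : HasGradientAt h v (γ t)) (hγ : HasDerivAt γ γ' t) :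
    HasDerivAt (fun s => h (γ s)) ⟪v, γ'⟫ t := by
  have := hh.hasFDerivAt.comp_hasDerivAt t hγ
  rwa [InnerProductSpace.toDual_apply_apply] at this

lemma HasGradientAt.add_const_mul {f g : E → ℝ} {a b x : E} (hf : HasGradientAt f a x)
    (hg : HasGradientAt g b x) (c : ℝ) :
    HasGradientAt (fun z => f z + c * g z) (a + c • b) x := by
  rw [hasGradientAt_iff_hasFDerivAt] at *
  exact (hf.add (hg.const_mul c)).congr_fderiv (by simp)

lemma IsLocalMin.hasGradientAt_eq_zero {h : E → ℝ} {a v : E} (hmin : IsLocalMin h a)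
    (hh : HasGradientAt h v a) : v = 0 :=
  (InnerProductSpace.toDual ℝ E).map_eq_zero_iff.mp (hmin.hasFDerivAt_eq_zero hh.hasFDerivAt)

lemma ContDiff.differentiable_gradient {h : E → ℝ} (hh : ContDiff ℝ 2 h) :
    Differentiable ℝ (gradient h) :=
  ((InnerProductSpace.toDual ℝ E).symm.contDiff.comp
    (hh.fderiv_right (m := 1) (by norm_num))).differentiable one_ne_zero

lemma StrongConvexOn.mul_sq_norm_le_inner_apply {h : E → ℝ} {m : ℝ}
    (hsc : StrongConvexOn univ m h) (hd : Differentiable ℝ h) {x : E} {H : E →L[ℝ] E}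
    (hH : HasFDerivAt (gradient h) H x) (u : E) : m * ‖u‖ ^ 2 ≤ ⟪H u, u⟫ := by
  have hline : ∀ t : ℝ, HasDerivAt (fun s : ℝ => x + s • u) u t := fun t => by
    simpa using ((hasDerivAt_id t).smul_const u).const_add x
  set ψ' : ℝ → ℝ := fun t => ⟪gradient h (x + t • u), u⟫ - m * ⟪x + t • u, u⟫
  have hconv : ConvexOn ℝ univ fun t : ℝ => h (x + t • u) - m / 2 * ‖x + t • u‖ ^ 2 := by
    refine ((strongConvexOn_iff_convex.mp hsc).comp_affineMap
      (AffineMap.lineMap x (x + u))).congr fun t _ => ?_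
    simp [AffineMap.lineMap_apply_module', add_comm]
  have hψ (t : ℝ) :
      HasDerivAt (fun s : ℝ => h (x + s • u) - m / 2 * ‖x + s • u‖ ^ 2) (ψ' t) t := by
    refine (((hd _).hasGradientAt.comp_hasDerivAt (hline t)).sub
      (((hline t).norm_sq).const_mul (m / 2))).congr_deriv ?_
    ring
  have hmono : Monotone ψ' := fun a b hab => by
    simpa [(hψ a).deriv, (hψ b).deriv] using
      hconv.monotoneOn_deriv (fun t _ => (hψ t).differentiableAt) trivial trivial hab
  have hψ'0 : HasDerivAt ψ' (⟪H u, u⟫ - m * ⟪u, u⟫) 0 := by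
    have hgrad := (hH.comp_hasDerivAt_of_eq 0 (hline 0) (by simp)).inner ℝ (hasDerivAt_const 0 u)
    have hlin := ((hline 0).inner ℝ (hasDerivAt_const 0 u)).const_mul m
    exact (hgrad.sub hlin).congr_deriv (by simp)
  have hslope := hψ'0.deriv ▸ hmono.deriv_nonneg (x := 0)
  rw [real_inner_self_eq_norm_sq] at hslope
  linarith

end Gradient

/-- If `λ ↦ θ(λ)` is differentiable and `∇g(θ(λ)) ≠ 0`, then
`d/dλ [g(θ(λ))] = -⟪∇g(θ(λ)), [∇²_θ L(θ(λ),λ)]⁻¹ ∇g(θ(λ))⟫ < 0`. -/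
theorem stmt_3 {n : ℕ} (f g : EuclideanSpace ℝ (Fin n) → ℝ)
    (hf : ContDiff ℝ 2 f) (hg : ContDiff ℝ 2 g)
    (hfc : ∃ m > (0:ℝ), StrongConvexOn Set.univ m f)
    (hgc : ∃ m > (0:ℝ), StrongConvexOn Set.univ m g)
    (θ : ℝ → EuclideanSpace ℝ (Fin n))
    (hθ : ∀ lam ≥ (0:ℝ), ∀ θ', θ' ≠ θ lam →
      f (θ lam) + lam * g (θ lam) < f θ' + lam * g θ')
    (hθd : Differentiable ℝ θ)
    (H : ℝ → (EuclideanSpace ℝ (Fin n) ≃L[ℝ] EuclideanSpace ℝ (Fin n)))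
    (hH : ∀ lam : ℝ, (H lam : EuclideanSpace ℝ (Fin n) →L[ℝ] EuclideanSpace ℝ (Fin n)) =
      fderiv ℝ (fun θ' => gradient f θ' + lam • gradient g θ') (θ lam))
    (lam : ℝ) (hlam : 0 ≤ lam)
    (hgrad : gradient g (θ lam) ≠ 0) :
    HasDerivAt (fun l => g (θ l))
      (-⟪gradient g (θ lam), (H lam).symm (gradient g (θ lam))⟫) lam ∧
    -⟪gradient g (θ lam), (H lam).symm (gradient g (θ lam))⟫ < 0 := by
  obtain ⟨mf, hmf, hfsc⟩ := hfc
  obtain ⟨mg, hmg, hgsc⟩ := hgc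
  have hfd : Differentiable ℝ f := hf.differentiable (by norm_num)
  have hgd : Differentiable ℝ g := hg.differentiable (by norm_num)
  have hgradL (l : ℝ) :
      gradient (fun z => f z + l * g z) = fun z => gradient f z + l • gradient g z :=
    gradient_eq fun z => (hfd z).hasGradientAt.add_const_mul (hgd z).hasGradientAt l
  have hstat : ∀ l ≥ lam, gradient f (θ l) + l • gradient g (θ l) = 0 := fun l hl => by
    refine IsLocalMin.hasGradientAt_eq_zero (Filter.Eventually.of_forall fun y => ?_)
      ((hfd _).hasGradientAt.add_const_mul (hgd _).hasGradientAt l)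
    rcases eq_or_ne y (θ l) with rfl | hne
    exacts [le_rfl, (hθ l (hlam.trans hl) y hne).le]
  have hHessian : HasFDerivAt (gradient fun z => f z + lam * g z) (H lam : _ →L[ℝ] _) (θ lam) := by
    rw [hgradL, hH]
    exact ((hf.differentiable_gradient _).add
      ((hg.differentiable_gradient _).const_smul lam)).hasFDerivAt
  have hcoercive : ∀ u, mf * ‖u‖ ^ 2 ≤ ⟪H lam u, u⟫ :=
    (hfsc.add_const_mul (hgsc.convexOn fun r => by positivity) hlam).mul_sq_norm_le_inner_apply
      (hfd.add (hgd.const_mul lam)) hHessian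
  have hθ' : deriv θ lam = -(H lam).symm (gradient g (θ lam)) := by
    rw [← map_neg, ← apply_deriv_eq_neg_of_stationary hstat (hθd lam).hasDerivAt
      (hgradL lam ▸ hHessian) (hg.differentiable_gradient _)]
    exact ((H lam).symm_apply_apply _).symm
  refine ⟨?_, neg_neg_of_pos ((H lam).inner_symm_apply_self_pos hmf hcoercive hgrad)⟩
  rw [← inner_neg_right, ← hθ']
  exact (hgd _).hasGradientAt.comp_hasDerivAt (hθd lam).hasDerivAt
end

section
/- Let f, g : ℝⁿ → ℝ be twice continuously differentiable and strongly convex with g having nonvanishing gradient along the path θ(λ) of minimizers of L(θ,λ) = f(θ) + λ·g(θ). Then the map λ ↦ g(θ(λ)) is strictly monotonically decreasing on [0, ∞). -/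
/-- Proposition 1: `λ ↦ g(θ(λ))` is strictly monotonically
decreasing on `[0, ∞)`, where `θ(λ)` is the unique minimizer of `f + λ g` and
`∇g` does not vanish along the path of minimizers. -/
theorem stmt_4 {n : ℕ} (f g : EuclideanSpace ℝ (Fin n) → ℝ)
    (hf : ContDiff ℝ 2 f) (hg : ContDiff ℝ 2 g)
    (hfc : ∃ m > (0:ℝ), StrongConvexOn Set.univ m f)
    (hgc : ∃ m > (0:ℝ), StrongConvexOn Set.univ m g)
    (θ : ℝ → EuclideanSpace ℝ (Fin n))
    (hθ : ∀ lam ≥ (0:ℝ), ∀ θ', θ' ≠ θ lam →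
      f (θ lam) + lam * g (θ lam) < f θ' + lam * g θ')
    (hgrad : ∀ lam ≥ (0:ℝ), gradient g (θ lam) ≠ 0) :
    StrictAntiOn (fun lam => g (θ lam)) (Set.Ici 0) := by
  intro a ha b hb hab
  by_cases hxy : θ a = θ b
  · -- contradiction with hgrad
    exfalso
    set x := θ a with hx
    have hfd : HasFDerivAt f (fderiv ℝ f x) x :=
      ((hf.differentiable (by norm_num)) x).hasFDerivAt
    have hgd : HasFDerivAt g (fderiv ℝ g x) x :=
      ((hg.differentiable (by norm_num)) x).hasFDerivAt
    have key : ∀ lam ≥ (0:ℝ), θ lam = x →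
        fderiv ℝ f x + lam • fderiv ℝ g x = 0 := by
      intro lam hlam hθlam
      have hmin : IsLocalMin (fun t => f t + lam * g t) x := by
        apply Filter.Eventually.of_forall
        intro y
        by_cases hy : y = x
        · simp [hy]
        · exact le_of_lt (by simpa [hθlam] using hθ lam hlam y (by simpa [hθlam] using hy))
      have hL : HasFDerivAt (fun t => f t + lam * g t)
          (fderiv ℝ f x + lam • fderiv ℝ g x) x := hfd.add (hgd.const_smul lam)
      exact hmin.hasFDerivAt_eq_zero hL
    have h1 := key a (Set.mem_Ici.mp ha) rfl
    have h2 := key b (Set.mem_Ici.mp hb) hxy.symm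
    have hsub : (b - a) • fderiv ℝ g x = 0 := by
      have := sub_eq_zero.mpr (h2.trans h1.symm)
      rw [show fderiv ℝ f x + b • fderiv ℝ g x - (fderiv ℝ f x + a • fderiv ℝ g x)
          = (b - a) • fderiv ℝ g x by module] at this
      exact this
    have hgz : fderiv ℝ g x = 0 := by
      have hba : b - a ≠ 0 := sub_ne_zero.mpr (ne_of_gt hab)
      exact (smul_eq_zero.mp hsub).resolve_left hba
    exact hgrad a (Set.mem_Ici.mp ha) (by simp [gradient, hgz, ← hx])
  · have h1 := hθ a (Set.mem_Ici.mp ha) (θ b) (Ne.symm hxy)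
    have h2 := hθ b (Set.mem_Ici.mp hb) (θ a) hxy
    nlinarith [hab]
end

section
/- Let f, g : ℝⁿ → ℝ be twice continuously differentiable and strongly convex, with θ(λ) the unique minimizer of f + λg (differentiable in λ, with ∇g(θ(λ)) ≠ 0 along the path), and Γ(λ) = min_θ (f(θ) + λg(θ)) the dual function. Then the set of maximizers of Γ over [0,∞) coincides with the set of minimizers of λ ↦ |g(θ(λ))| over [0,∞). -/
/-!
Since `θ(λ)` minimizes the Lagrangian `f + λ g`, for `λ ≠ μ` we have
`Γ(λ) < f(θ(μ)) + λ g(θ(μ)) = Γ(μ) + (λ - μ) g(θ(μ))`, strictly because `θ(λ) ≠ θ(μ)`: the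
first-order conditions at a common point would force `(λ - μ) ∇g = 0`. So `G = g ∘ θ` is a strict
supergradient of the concave function `Γ`, hence strictly decreasing. Together with the continuity
of `G`, both the maximizers of `Γ` on `[0, ∞)` and the minimizers of `|G|` on `[0, ∞)` are then
exactly the points satisfying the complementary slackness conditions `G(λ) ≤ 0`, `λ G(λ) = 0`.
-/

open Set

def IsStrictSupergradientOn (Γ G : ℝ → ℝ) (s : Set ℝ) : Prop :=
  ∀ l ∈ s, ∀ m ∈ s, l ≠ m → Γ l < Γ m + (l - m) * G m

section SignPersistence

variable {G : ℝ → ℝ}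

theorem exists_gt_pos_of_continuousOn (hG : ContinuousOn G (Ici 0)) {l : ℝ} (hl : 0 ≤ l)
    (hGl : 0 < G l) : ∃ m, l < m ∧ 0 < G m := by
  have hcl : G l ∈ closure (G '' Ioi l) :=
    ((hG l hl).mono (Ioi_subset_Ici hl)).mem_closure_image
      (by rw [closure_Ioi]; exact self_mem_Ici)
  obtain ⟨_, hpos, m, hm, rfl⟩ := mem_closure_iff.1 hcl (Ioi 0) isOpen_Ioi hGl
  exact ⟨m, hm, hpos⟩

theorem exists_lt_neg_of_continuousOn (hG : ContinuousOn G (Ici 0)) {l : ℝ} (hl : 0 < l)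
    (hGl : G l < 0) : ∃ m, 0 ≤ m ∧ m < l ∧ G m < 0 := by
  have hcl : G l ∈ closure (G '' Ico 0 l) :=
    ((hG l hl.le).mono Ico_subset_Ici_self).mem_closure_image
      (by rw [closure_Ico hl.ne]; exact right_mem_Icc.2 hl.le)
  obtain ⟨_, hneg, m, hm, rfl⟩ := mem_closure_iff.1 hcl (Iio 0) isOpen_Iio hGl
  exact ⟨m, hm.1, hm.2, hneg⟩

end SignPersistence

namespace IsStrictSupergradientOn

variable {Γ G : ℝ → ℝ} {s : Set ℝ}

theorem le (h : IsStrictSupergradientOn Γ G s) {l m : ℝ} (hl : l ∈ s) (hm : m ∈ s) :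
    Γ l ≤ Γ m + (l - m) * G m := by
  rcases eq_or_ne l m with rfl | hlm
  · simp
  · exact (h l hl m hm hlm).le

theorem strictAntiOn (h : IsStrictSupergradientOn Γ G s) : StrictAntiOn G s := by
  intro l hl m hm hlm
  have h₁ := h l hl m hm hlm.ne
  have h₂ := h m hm l hl hlm.ne'
  nlinarith

theorem isMaxOn_Ici_iff (h : IsStrictSupergradientOn Γ G (Ici 0)) (hG : ContinuousOn G (Ici 0))
    {l : ℝ} (hl : 0 ≤ l) : IsMaxOn Γ (Ici 0) l ↔ G l ≤ 0 ∧ l * G l = 0 := by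
  constructor
  · intro hmax
    have beaten : ∀ m, 0 ≤ m → (l - m) * G m < 0 → False := fun m hm hneg => by
      have hle : Γ m ≤ Γ l := hmax hm
      linarith [h.le hl hm]
    have hGl : G l ≤ 0 := by
      by_contra! hpos
      obtain ⟨m, hlm, hGm⟩ := exists_gt_pos_of_continuousOn hG hl hpos
      exact beaten m (by linarith) (mul_neg_of_neg_of_pos (by linarith) hGm)
    refine ⟨hGl, ?_⟩
    rcases hl.eq_or_lt with rfl | hl₀
    · exact zero_mul _
    rcases hGl.eq_or_lt with hG₀ | hneg
    · rw [hG₀, mul_zero]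
    obtain ⟨m, hm, hml, hGm⟩ := exists_lt_neg_of_continuousOn hG hl₀ hneg
    exact (beaten m hm (mul_neg_of_pos_of_neg (by linarith) hGm)).elim
  · rintro ⟨hGl, hslack⟩ m (hm : 0 ≤ m)
    show Γ m ≤ Γ l
    have : (m - l) * G l ≤ 0 := by
      rw [sub_mul, hslack, sub_zero]
      exact mul_nonpos_of_nonneg_of_nonpos hm hGl
    linarith [h.le hm hl]

theorem isMinOn_abs_Ici_iff (h : IsStrictSupergradientOn Γ G (Ici 0))
    (hG : ContinuousOn G (Ici 0)) {l : ℝ} (hl : 0 ≤ l) :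
    IsMinOn (fun m => |G m|) (Ici 0) l ↔ G l ≤ 0 ∧ l * G l = 0 := by
  have hanti := h.strictAntiOn
  constructor
  · intro hmin
    have hGl : G l ≤ 0 := by
      by_contra! hpos
      obtain ⟨m, hlm, hGm⟩ := exists_gt_pos_of_continuousOn hG hl hpos
      have hle : |G l| ≤ |G m| := hmin (mem_Ici.2 (by linarith))
      rw [abs_of_pos hpos, abs_of_pos hGm] at hle
      exact absurd (hanti hl (mem_Ici.2 (by linarith)) hlm) (not_lt.2 hle)
    refine ⟨hGl, ?_⟩
    rcases hl.eq_or_lt with rfl | hl₀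
    · exact zero_mul _
    rcases hGl.eq_or_lt with hG₀ | hneg
    · rw [hG₀, mul_zero]
    obtain ⟨m, hm, hml, hGm⟩ := exists_lt_neg_of_continuousOn hG hl₀ hneg
    have hle : |G l| ≤ |G m| := hmin (mem_Ici.2 hm)
    rw [abs_of_neg hneg, abs_of_neg hGm] at hle
    exact absurd (hanti hm hl hml) (not_lt.2 (by linarith))
  · rintro ⟨hGl, hslack⟩ m (hm : 0 ≤ m)
    show |G l| ≤ |G m|
    rcases mul_eq_zero.1 hslack with rfl | hG₀
    · rcases hm.eq_or_lt with rfl | hm₀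
      · exact le_rfl
      have hlt := hanti self_mem_Ici hm hm₀
      rw [abs_of_nonpos hGl, abs_of_neg (hlt.trans_le hGl)]
      linarith
    · simp [hG₀]

theorem isMaxOn_iff_isMinOn_abs (h : IsStrictSupergradientOn Γ G (Ici 0))
    (hG : ContinuousOn G (Ici 0)) {l : ℝ} (hl : 0 ≤ l) :
    IsMaxOn Γ (Ici 0) l ↔ IsMinOn (fun m => |G m|) (Ici 0) l :=
  (h.isMaxOn_Ici_iff hG hl).trans (h.isMinOn_abs_Ici_iff hG hl).symm

end IsStrictSupergradientOn

section Lagrangian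

variable {E : Type*} [NormedAddCommGroup E] [NormedSpace ℝ E] {f g : E → ℝ} {x : E}

theorem fderiv_add_smul_eq_zero_of_isMinOn {l : ℝ}
    (hmin : IsMinOn (fun y => f y + l * g y) univ x)
    (hf : DifferentiableAt ℝ f x) (hg : DifferentiableAt ℝ g x) :
    fderiv ℝ f x + l • fderiv ℝ g x = 0 :=
  (hmin.isLocalMin Filter.univ_mem).hasFDerivAt_eq_zero
    (hf.hasFDerivAt.add (hg.hasFDerivAt.const_mul l))

theorem eq_of_isMinOn_add_mul {l m : ℝ}
    (hl : IsMinOn (fun y => f y + l * g y) univ x)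
    (hm : IsMinOn (fun y => f y + m * g y) univ x)
    (hf : DifferentiableAt ℝ f x) (hg : DifferentiableAt ℝ g x) (hg' : fderiv ℝ g x ≠ 0) :
    l = m := by
  have hdiff : (l - m) • fderiv ℝ g x = 0 := by
    rw [sub_smul, ← add_sub_add_left_eq_sub _ _ (fderiv ℝ f x),
      fderiv_add_smul_eq_zero_of_isMinOn hl hf hg,
      fderiv_add_smul_eq_zero_of_isMinOn hm hf hg, sub_zero]
  exact sub_eq_zero.1 ((smul_eq_zero.1 hdiff).resolve_right hg')

theorem isStrictSupergradientOn_dual {θ : ℝ → E}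
    (hθ : ∀ l ≥ (0:ℝ), ∀ y, y ≠ θ l → f (θ l) + l * g (θ l) < f y + l * g y)
    (hf : ∀ l ≥ (0:ℝ), DifferentiableAt ℝ f (θ l)) (hg : ∀ l ≥ (0:ℝ), DifferentiableAt ℝ g (θ l))
    (hg' : ∀ l ≥ (0:ℝ), fderiv ℝ g (θ l) ≠ 0) :
    IsStrictSupergradientOn (fun l => f (θ l) + l * g (θ l)) (fun l => g (θ l)) (Ici 0) := by
  have hmin : ∀ l ≥ (0:ℝ), IsMinOn (fun y => f y + l * g y) univ (θ l) := fun l hl =>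
    isMinOn_univ_iff.2 fun y => by
      rcases eq_or_ne y (θ l) with rfl | hy
      · exact le_rfl
      · exact (hθ l hl y hy).le
  intro l hl m hm hlm
  have hθlm : θ m ≠ θ l := fun heq =>
    hlm (eq_of_isMinOn_add_mul (heq ▸ hmin l hl) (hmin m hm) (hf m hm) (hg m hm) (hg' m hm))
  have := hθ l hl (θ m) hθlm
  simp only
  linarith

end Lagrangian

theorem stmt_9_general {n : ℕ} (f g : EuclideanSpace ℝ (Fin n) → ℝ)
    (hf : ContDiff ℝ 2 f) (hg : ContDiff ℝ 2 g)
    (θ : ℝ → EuclideanSpace ℝ (Fin n))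
    (hθ : ∀ lam ≥ (0:ℝ), ∀ θ', θ' ≠ θ lam →
      f (θ lam) + lam * g (θ lam) < f θ' + lam * g θ')
    (hθd : Differentiable ℝ θ)
    (hgrad : ∀ lam ≥ (0:ℝ), gradient g (θ lam) ≠ 0) :
    {lam ∈ Set.Ici (0:ℝ) |
        IsMaxOn (fun l => f (θ l) + l * g (θ l)) (Set.Ici 0) lam} =
      {lam ∈ Set.Ici (0:ℝ) |
        IsMinOn (fun l => |g (θ l)|) (Set.Ici 0) lam} := by
  have hfd : Differentiable ℝ f := hf.differentiable (by norm_num)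
  have hgd : Differentiable ℝ g := hg.differentiable (by norm_num)
  have hsuper := isStrictSupergradientOn_dual hθ (fun l _ => hfd (θ l)) (fun l _ => hgd (θ l))
    fun l hl hzero => hgrad l hl (by simp [gradient, hzero])
  have hcont : ContinuousOn (fun l => g (θ l)) (Ici 0) :=
    (hgd.continuous.comp hθd.continuous).continuousOn
  ext l
  exact and_congr_right fun hl => hsuper.isMaxOn_iff_isMinOn_abs hcont hl

/-- key step of Theorem 1: the maximizers of the dual function
`Γ(λ) = f(θ(λ)) + λ g(θ(λ))` over `[0,∞)` coincide with the minimizers of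
`λ ↦ |g(θ(λ))|` over `[0,∞)`. -/
theorem stmt_9 {n : ℕ} (f g : EuclideanSpace ℝ (Fin n) → ℝ)
    (hf : ContDiff ℝ 2 f) (hg : ContDiff ℝ 2 g)
    (hfc : ∃ m > (0:ℝ), StrongConvexOn Set.univ m f)
    (hgc : ∃ m > (0:ℝ), StrongConvexOn Set.univ m g)
    (θ : ℝ → EuclideanSpace ℝ (Fin n))
    (hθ : ∀ lam ≥ (0:ℝ), ∀ θ', θ' ≠ θ lam →
      f (θ lam) + lam * g (θ lam) < f θ' + lam * g θ')
    (hθd : Differentiable ℝ θ)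
    (hgrad : ∀ lam ≥ (0:ℝ), gradient g (θ lam) ≠ 0) :
    {lam ∈ Set.Ici (0:ℝ) |
        IsMaxOn (fun l => f (θ l) + l * g (θ l)) (Set.Ici 0) lam} =
      {lam ∈ Set.Ici (0:ℝ) |
        IsMinOn (fun l => |g (θ l)|) (Set.Ici 0) lam} :=
  stmt_9_general f g hf hg θ hθ hθd hgrad
end

section
/- Let f, g : ℝ → ℝ be twice continuously differentiable and strongly convex with g'(θ) ≠ 0 along the minimizer path. For λ ≥ 0 let θ(λ) be the unique minimizer of f + λg. Then λ ↦ g(θ(λ)) is strictly decreasing: for 0 ≤ λ₁ < λ₂, g(θ(λ₂)) < g(θ(λ₁)). -/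
/-!
Adding the optimality inequalities of `θ λ₁` and `θ λ₂` gives
`(λ₂ - λ₁) (g (θ λ₂) - g (θ λ₁)) < 0` as soon as `θ λ₂ ≠ θ λ₁`. The two minimizers cannot
coincide: a common minimizer `x` satisfies `f' x + λ₁ g' x = 0 = f' x + λ₂ g' x`, forcing
`g' x = 0`.
-/

open Set

theorem lt_of_add_mul_le_of_add_mul_lt {f g : ℝ → ℝ} {c₁ c₂ x₁ x₂ : ℝ} (hc : c₁ < c₂)
    (h₁ : f x₁ + c₁ * g x₁ ≤ f x₂ + c₁ * g x₂) (h₂ : f x₂ + c₂ * g x₂ < f x₁ + c₂ * g x₁) :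
    g x₂ < g x₁ := by
  nlinarith

theorem IsLocalMin.deriv_add_mul_eq_zero {f g : ℝ → ℝ} {c x : ℝ} (hf : DifferentiableAt ℝ f x)
    (hg : DifferentiableAt ℝ g x) (h : IsLocalMin (fun t => f t + c * g t) x) :
    deriv f x + c * deriv g x = 0 := by
  rw [← h.deriv_eq_zero, deriv_fun_add hf (hg.const_mul c), deriv_const_mul c hg]

theorem deriv_eq_zero_of_isLocalMin_add_mul {f g : ℝ → ℝ} {c₁ c₂ x : ℝ}
    (hf : DifferentiableAt ℝ f x) (hc : c₁ ≠ c₂)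
    (h₁ : IsLocalMin (fun t => f t + c₁ * g t) x) (h₂ : IsLocalMin (fun t => f t + c₂ * g t) x) :
    deriv g x = 0 := by
  by_contra hg'
  -- `deriv g x = 0` by convention wherever `g` is not differentiable.
  have hg := differentiableAt_of_deriv_ne_zero hg'
  have e₁ := h₁.deriv_add_mul_eq_zero hf hg
  have e₂ := h₂.deriv_add_mul_eq_zero hf hg
  have : (c₂ - c₁) * deriv g x = 0 := by linarith
  exact hg' ((mul_eq_zero.mp this).resolve_left (sub_ne_zero.mpr hc.symm))

theorem stmt_10_general (f g : ℝ → ℝ)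
    (hf : ContDiff ℝ 2 f)
    (θ : ℝ → ℝ)
    (hθ : ∀ lam ≥ (0:ℝ), ∀ t, t ≠ θ lam →
      f (θ lam) + lam * g (θ lam) < f t + lam * g t)
    (hgrad : ∀ lam ≥ (0:ℝ), deriv g (θ lam) ≠ 0) :
    ∀ lam₁ lam₂ : ℝ, 0 ≤ lam₁ → lam₁ < lam₂ → g (θ lam₂) < g (θ lam₁) := by
  intro l₁ l₂ h₁ h₁₂
  have h₂ : 0 ≤ l₂ := h₁.trans h₁₂.le
  have hmin : ∀ lam ≥ (0:ℝ), IsMinOn (fun t => f t + lam * g t) univ (θ lam) := by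
    intro lam hlam t _
    rcases eq_or_ne t (θ lam) with rfl | ht
    · exact le_refl (f (θ lam) + lam * g (θ lam))
    · exact (hθ lam hlam t ht).le
  have hne : θ l₂ ≠ θ l₁ := by
    intro heq
    have hloc₂ := (hmin l₂ h₂).isLocalMin Filter.univ_mem
    rw [heq] at hloc₂
    exact hgrad l₁ h₁ <| deriv_eq_zero_of_isLocalMin_add_mul
      ((hf.differentiable two_ne_zero) _) h₁₂.ne ((hmin l₁ h₁).isLocalMin Filter.univ_mem) hloc₂
  exact lt_of_add_mul_le_of_add_mul_lt h₁₂ (hmin l₁ h₁ (mem_univ _)) (hθ l₂ h₂ _ hne.symm)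

/-- one-dimensional instance of Proposition 1: `λ ↦ g(θ(λ))` is
strictly decreasing on `[0,∞)`. -/
theorem stmt_10 (f g : ℝ → ℝ)
    (hf : ContDiff ℝ 2 f) (hg : ContDiff ℝ 2 g)
    (hfc : ∃ m > (0:ℝ), StrongConvexOn Set.univ m f)
    (hgc : ∃ m > (0:ℝ), StrongConvexOn Set.univ m g)
    (θ : ℝ → ℝ)
    (hθ : ∀ lam ≥ (0:ℝ), ∀ t, t ≠ θ lam →
      f (θ lam) + lam * g (θ lam) < f t + lam * g t)
    (hgrad : ∀ lam ≥ (0:ℝ), deriv g (θ lam) ≠ 0) :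
    ∀ lam₁ lam₂ : ℝ, 0 ≤ lam₁ → lam₁ < lam₂ → g (θ lam₂) < g (θ lam₁) :=
  stmt_10_general f g hf θ hθ hgrad
end
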